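/- arXiv:1902.03999 — 2 statements merged into one kernel-verified Lean document; each statement's English description precedes it below -/
import Mathlib

section
/- Let n be a positive integer, K an n×n real symmetric positive semidefinite matrix, λ > 0, and g, h ∈ ℝⁿ with h_i > 0 for all i. Let D = diag(√h_1, …, √h_n) and ỹ ∈ ℝⁿ with ỹ_i = −g_i / h_i. Then the vector α* = D (D K D + λ I_n)⁻¹ D ỹ is a global minimizer over α ∈ ℝⁿ of the penalized second-order boosting objective Q(α) = Σ_{i=1}^n [ g_i (Kα)_i + (1/2) h_i (Kα)_i² ] + (1/2) λ αᵀ K α; that is, Q(α*) ≤ Q(β) for all β ∈ ℝⁿ. -/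
open Matrix

/-!
The objective is a convex quadratic in `α`: expanding gives
`Q (α + v) = Q α + ⟪K v, g + h ⊙ K α + λ α⟫ + (½ ∑ hᵢ (K v)ᵢ² + ½ λ vᵀ K v)`,
and the last bracket is nonnegative since `K ⪰ 0` and `h, λ ≥ 0`. Hence every `α` with
`g + h ⊙ K α + λ α = 0` is a global minimizer. For `α* = D A⁻¹ D ỹ` with `A = D K D + λ I`,
the push-through identity `(D² K + λ I) D = D A` gives `(D² K + λ I) α* = D² ỹ = -g`,
which is that stationarity condition.
-/

section Objective

variable {ι : Type*} [Fintype ι] (K : Matrix ι ι ℝ) (lam : ℝ) (g h : ι → ℝ)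

noncomputable def newtonObjective (α : ι → ℝ) : ℝ :=
  ∑ i, (g i * (K *ᵥ α) i + 1 / 2 * h i * (K *ᵥ α) i ^ 2) + 1 / 2 * lam * (α ⬝ᵥ K *ᵥ α)

variable {K lam g h}

lemma Matrix.IsSymm.dotProduct_mulVec_comm (hK : K.IsSymm) (x y : ι → ℝ) :
    x ⬝ᵥ K *ᵥ y = y ⬝ᵥ K *ᵥ x := by
  rw [dotProduct_mulVec, ← mulVec_transpose, hK.eq, dotProduct_comm]

lemma newtonObjective_add (hK : K.IsSymm) (α v : ι → ℝ) :
    newtonObjective K lam g h (α + v) = newtonObjective K lam g h α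
      + (K *ᵥ v) ⬝ᵥ (g + h * (K *ᵥ α) + lam • α) + newtonObjective K lam 0 h v := by
  have hcross : v ⬝ᵥ K *ᵥ α = (K *ᵥ v) ⬝ᵥ α := by
    rw [← hK.dotProduct_mulVec_comm, dotProduct_comm]
  simp only [newtonObjective, mulVec_add, add_dotProduct, dotProduct_add, hcross,
    dotProduct_comm α (K *ᵥ v)]
  simp only [dotProduct, Pi.add_apply, Pi.mul_apply, Pi.smul_apply, Pi.zero_apply, smul_eq_mul,
    Finset.mul_sum, ← Finset.sum_add_distrib]
  refine Finset.sum_congr rfl fun i _ => ?_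
  ring

lemma newtonObjective_zero_nonneg (hK : K.PosSemidef) (hh : 0 ≤ h) (hlam : 0 ≤ lam)
    (v : ι → ℝ) : 0 ≤ newtonObjective K lam 0 h v := by
  have hquad : 0 ≤ v ⬝ᵥ K *ᵥ v := by simpa using hK.dotProduct_mulVec_nonneg v
  have hweighted : 0 ≤ ∑ i, (0 * (K *ᵥ v) i + 1 / 2 * h i * (K *ᵥ v) i ^ 2) :=
    Finset.sum_nonneg fun i _ => by
      rw [zero_mul, zero_add]
      exact mul_nonneg (mul_nonneg (by norm_num) (hh i)) (sq_nonneg _)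
  unfold newtonObjective
  positivity

theorem newtonObjective_le_of_stationary (hK : K.PosSemidef) (hh : 0 ≤ h) (hlam : 0 ≤ lam)
    {α : ι → ℝ} (hα : g + h * (K *ᵥ α) + lam • α = 0) (β : ι → ℝ) :
    newtonObjective K lam g h α ≤ newtonObjective K lam g h β := by
  have hβ : β = α + (β - α) := (add_sub_cancel α β).symm
  rw [hβ, newtonObjective_add (isHermitian_iff_isSymm.mp hK.isHermitian), hα, dotProduct_zero,
    add_zero]
  linarith [newtonObjective_zero_nonneg hK hh hlam (β - α)]

end Objective

section PushThrough

variable {ι R : Type*} [Fintype ι] [DecidableEq ι] [CommRing R]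

lemma Matrix.push_through_mulVec (D K : Matrix ι ι R) (c : R)
    (hA : IsUnit (D * K * D + c • 1).det) (y : ι → R) :
    (D * D * K + c • 1) *ᵥ (D *ᵥ ((D * K * D + c • 1)⁻¹ *ᵥ (D *ᵥ y))) = (D * D) *ᵥ y := by
  have hcomm : (D * D * K + c • 1) * D = D * (D * K * D + c • 1) := by
    simp only [add_mul, mul_add, smul_mul, Matrix.mul_smul, one_mul, mul_one, Matrix.mul_assoc]
  rw [mulVec_mulVec, mulVec_mulVec, mulVec_mulVec, hcomm, Matrix.mul_assoc D,
    mul_nonsing_inv _ hA, mul_one]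

end PushThrough

section NewtonStep

variable {ι : Type*} [Fintype ι] [DecidableEq ι]

noncomputable def kernelNewtonStep (K : Matrix ι ι ℝ) (lam : ℝ) (g h : ι → ℝ) : ι → ℝ :=
  let D := diagonal fun i => √(h i)
  D *ᵥ ((D * K * D + lam • 1)⁻¹ *ᵥ (D *ᵥ (-g / h)))

lemma kernelNewtonStep_stationary {K : Matrix ι ι ℝ} (hK : K.PosSemidef) {lam : ℝ}
    (hlam : 0 < lam) (g : ι → ℝ) {h : ι → ℝ} (hh : ∀ i, 0 < h i) :
    g + h * (K *ᵥ kernelNewtonStep K lam g h) + lam • kernelNewtonStep K lam g h = 0 := by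
  set D : Matrix ι ι ℝ := diagonal fun i => √(h i)
  have hDD : D * D = diagonal h := by
    rw [diagonal_mul_diagonal]
    exact congrArg diagonal (funext fun i => Real.mul_self_sqrt (hh i).le)
  have hA : (D * K * D + lam • 1).PosDef := by
    refine PosDef.posSemidef_add ?_ (PosDef.one.smul hlam)
    simpa [D] using hK.mul_mul_conjTranspose_same D
  have hnewton : (diagonal h * K + lam • 1) *ᵥ kernelNewtonStep K lam g h = -g := by
    rw [← hDD]
    refine (push_through_mulVec D K lam
      ((isUnit_iff_isUnit_det _).mp hA.isUnit) (-g / h)).trans ?_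
    rw [hDD]
    funext i
    simp [mulVec_diagonal, mul_div_cancel₀ _ (hh i).ne']
  rw [add_mulVec, ← mulVec_mulVec, smul_mulVec, one_mulVec,
    show diagonal h *ᵥ _ = h * _ from funext (mulVec_diagonal h _)] at hnewton
  rw [add_assoc, hnewton, add_neg_cancel]

end NewtonStep

theorem ktboost_newton_kernel_update_general (n : ℕ)
    (K : Matrix (Fin n) (Fin n) ℝ) (hK : K.PosSemidef)
    (lam : ℝ) (hlam : 0 < lam)
    (g h : Fin n → ℝ) (hh : ∀ i, 0 < h i)
    (D : Matrix (Fin n) (Fin n) ℝ) (hD : D = Matrix.diagonal fun i => Real.sqrt (h i))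
    (ytil : Fin n → ℝ) (hy : ∀ i, ytil i = -g i / h i)
    (Q : (Fin n → ℝ) → ℝ)
    (hQ : ∀ α, Q α =
      (∑ i, (g i * (K.mulVec α) i + (1 / 2) * h i * (K.mulVec α) i ^ 2))
        + (1 / 2) * lam * (α ⬝ᵥ K.mulVec α))
    (αstar : Fin n → ℝ)
    (hα : αstar = D.mulVec
      ((D * K * D + lam • (1 : Matrix (Fin n) (Fin n) ℝ))⁻¹.mulVec (D.mulVec ytil))) :
    ∀ β : Fin n → ℝ, Q αstar ≤ Q β := by
  have hQ' : Q = newtonObjective K lam g h := funext hQ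
  have hy' : ytil = -g / h := funext hy
  subst hQ' hy' hD hα
  exact newtonObjective_le_of_stationary hK (fun i => (hh i).le) hlam.le
    (kernelNewtonStep_stationary hK hlam g hh)

/-- Proposition 1 (KTBoost): the vector `α* = D (D K D + λ I)⁻¹ D ỹ` globally minimizes
the penalized second-order boosting objective
`Q(α) = ∑ᵢ [gᵢ (Kα)ᵢ + (1/2) hᵢ (Kα)ᵢ²] + (1/2) λ αᵀ K α`. -/
theorem ktboost_newton_kernel_update (n : ℕ) (hn : 0 < n)
    (K : Matrix (Fin n) (Fin n) ℝ) (hK : K.PosSemidef)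
    (lam : ℝ) (hlam : 0 < lam)
    (g h : Fin n → ℝ) (hh : ∀ i, 0 < h i)
    (D : Matrix (Fin n) (Fin n) ℝ) (hD : D = Matrix.diagonal fun i => Real.sqrt (h i))
    (ytil : Fin n → ℝ) (hy : ∀ i, ytil i = -g i / h i)
    (Q : (Fin n → ℝ) → ℝ)
    (hQ : ∀ α, Q α =
      (∑ i, (g i * (K.mulVec α) i + (1 / 2) * h i * (K.mulVec α) i ^ 2))
        + (1 / 2) * lam * (α ⬝ᵥ K.mulVec α))
    (αstar : Fin n → ℝ)
    (hα : αstar = D.mulVec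
      ((D * K * D + lam • (1 : Matrix (Fin n) (Fin n) ℝ))⁻¹.mulVec (D.mulVec ytil))) :
    ∀ β : Fin n → ℝ, Q αstar ≤ Q β :=
  ktboost_newton_kernel_update_general n K hK lam hlam g h hh D hD ytil hy Q hQ αstar hα
end

section
/- Let n be a positive integer, K an n×n real symmetric positive semidefinite matrix, λ > 0, and g ∈ ℝⁿ. Then α* = (K + λ I_n)⁻¹ (−g) is a global minimizer over α ∈ ℝⁿ of the gradient-boosting objective Q(α) = Σ_{i=1}^n [ g_i (Kα)_i + (1/2) (Kα)_i² ] + (1/2) λ αᵀ K α. -/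
/-!
Since `K` is symmetric, `Q(α* + d) = Q(α*) + ⟪g + Kα* + λα*, Kd⟫ + ½‖Kd‖² + ½λ dᵀKd`.
The normal equation `(K + λI)α* = −g` kills the cross term, and the remaining two terms are
nonnegative because `K` is positive semidefinite and `λ ≥ 0`.
-/

open Matrix

namespace Matrix

variable {ι : Type*} [Fintype ι]

noncomputable def gradientBoostingObjective (K : Matrix ι ι ℝ) (lam : ℝ) (g α : ι → ℝ) : ℝ :=
  g ⬝ᵥ K *ᵥ α + 1 / 2 * (K *ᵥ α ⬝ᵥ K *ᵥ α) + 1 / 2 * lam * (α ⬝ᵥ K *ᵥ α)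

theorem gradientBoostingObjective_eq_sum (K : Matrix ι ι ℝ) (lam : ℝ) (g α : ι → ℝ) :
    gradientBoostingObjective K lam g α =
      ∑ i, (g i * (K *ᵥ α) i + 1 / 2 * (K *ᵥ α) i ^ 2) + 1 / 2 * lam * (α ⬝ᵥ K *ᵥ α) := by
  simp only [gradientBoostingObjective, dotProduct, Finset.sum_add_distrib, Finset.mul_sum, sq]

theorem IsSymm.dotProduct_mulVec_comm_s9 {K : Matrix ι ι ℝ} (hK : K.IsSymm) (x y : ι → ℝ) :
    x ⬝ᵥ K *ᵥ y = y ⬝ᵥ K *ᵥ x := by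
  rw [dotProduct_mulVec, ← mulVec_transpose, hK.eq, dotProduct_comm]

theorem IsSymm.gradientBoostingObjective_add {K : Matrix ι ι ℝ} (hK : K.IsSymm) (lam : ℝ)
    (g a d : ι → ℝ) :
    gradientBoostingObjective K lam g (a + d) =
      gradientBoostingObjective K lam g a + (g + K *ᵥ a + lam • a) ⬝ᵥ K *ᵥ d +
        (1 / 2 * (K *ᵥ d ⬝ᵥ K *ᵥ d) + 1 / 2 * lam * (d ⬝ᵥ K *ᵥ d)) := by
  have hcross : d ⬝ᵥ K *ᵥ a = a ⬝ᵥ K *ᵥ d := hK.dotProduct_mulVec_comm_s9 d a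
  simp only [gradientBoostingObjective, mulVec_add, dotProduct_add, add_dotProduct,
    smul_dotProduct, smul_eq_mul, hcross, dotProduct_comm (K *ᵥ d) (K *ᵥ a)]
  ring

theorem PosSemidef.gradientBoostingObjective_le {K : Matrix ι ι ℝ} (hK : K.PosSemidef)
    {lam : ℝ} (hlam : 0 ≤ lam) {g a : ι → ℝ} (ha : K *ᵥ a + lam • a = -g) (b : ι → ℝ) :
    gradientBoostingObjective K lam g a ≤ gradientBoostingObjective K lam g b := by
  have hsymm : K.IsSymm := isHermitian_iff_isSymm.mp hK.isHermitian
  have hstationary : g + K *ᵥ a + lam • a = 0 := by rw [add_assoc, ha, add_neg_cancel]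
  have hfit : 0 ≤ K *ᵥ (b - a) ⬝ᵥ K *ᵥ (b - a) := dotProduct_self_star_nonneg _
  have hpenalty : 0 ≤ lam * ((b - a) ⬝ᵥ K *ᵥ (b - a)) :=
    mul_nonneg hlam (by simpa using hK.dotProduct_mulVec_nonneg (b - a))
  rw [← add_sub_cancel a b, hsymm.gradientBoostingObjective_add, hstationary, zero_dotProduct]
  linarith

theorem PosSemidef.mulVec_add_smul_one_inv_mulVec {K : Matrix ι ι ℝ} [DecidableEq ι]
    (hK : K.PosSemidef) {lam : ℝ} (hlam : 0 < lam) (v : ι → ℝ) :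
    K *ᵥ ((K + lam • 1)⁻¹ *ᵥ v) + lam • ((K + lam • 1)⁻¹ *ᵥ v) = v := by
  have hdet : IsUnit (K + lam • 1).det :=
    (PosDef.posSemidef_add hK (PosDef.one.smul hlam)).det_pos.ne'.isUnit
  have hsolve : (K + lam • 1) *ᵥ ((K + lam • 1)⁻¹ *ᵥ v) = v := by
    rw [mulVec_mulVec, mul_nonsing_inv _ hdet, one_mulVec]
  rwa [add_mulVec, smul_mulVec, one_mulVec] at hsolve

end Matrix

theorem ktboost_gradient_kernel_update_general (n : ℕ)
    (K : Matrix (Fin n) (Fin n) ℝ) (hK : K.PosSemidef)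
    (lam : ℝ) (hlam : 0 < lam) (g : Fin n → ℝ)
    (Q : (Fin n → ℝ) → ℝ)
    (hQ : ∀ α, Q α =
      (∑ i, (g i * (K.mulVec α) i + (1 / 2) * (K.mulVec α) i ^ 2))
        + (1 / 2) * lam * (α ⬝ᵥ K.mulVec α))
    (αstar : Fin n → ℝ)
    (hα : αstar = (K + lam • (1 : Matrix (Fin n) (Fin n) ℝ))⁻¹.mulVec (-g)) :
    ∀ β : Fin n → ℝ, Q αstar ≤ Q β := by
  have hQ' : Q = gradientBoostingObjective K lam g :=
    funext fun α ↦ (hQ α).trans (gradientBoostingObjective_eq_sum K lam g α).symm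
  have hnormal : K *ᵥ αstar + lam • αstar = -g := by
    rw [hα]
    exact hK.mulVec_add_smul_one_inv_mulVec hlam (-g)
  rw [hQ']
  exact hK.gradientBoostingObjective_le hlam.le hnormal

/-- Gradient boosting version of the kernel update in KTBoost: `α* = (K + λI)⁻¹(−g)`
globally minimizes `Q(α) = ∑ᵢ [gᵢ (Kα)ᵢ + (1/2)(Kα)ᵢ²] + (1/2) λ αᵀKα`. -/
theorem ktboost_gradient_kernel_update (n : ℕ) (hn : 0 < n)
    (K : Matrix (Fin n) (Fin n) ℝ) (hK : K.PosSemidef)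
    (lam : ℝ) (hlam : 0 < lam) (g : Fin n → ℝ)
    (Q : (Fin n → ℝ) → ℝ)
    (hQ : ∀ α, Q α =
      (∑ i, (g i * (K.mulVec α) i + (1 / 2) * (K.mulVec α) i ^ 2))
        + (1 / 2) * lam * (α ⬝ᵥ K.mulVec α))
    (αstar : Fin n → ℝ)
    (hα : αstar = (K + lam • (1 : Matrix (Fin n) (Fin n) ℝ))⁻¹.mulVec (-g)) :
    ∀ β : Fin n → ℝ, Q αstar ≤ Q β :=
  ktboost_gradient_kernel_update_general n K hK lam hlam g Q hQ αstar hα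
end
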